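/- arXiv:2301.00624 — 3 statements merged into one kernel-verified Lean document; each statement's English description precedes it below -/
import Mathlib

section
/- If a directed graph G_T on a finite vertex set is acyclic and a loop processes vertices by repeatedly dequeuing a vertex from a queue, possibly enqueuing finitely many other vertices each iteration, but aborts as soon as adding an edge would create a cycle in G_T (where exactly one edge is recorded per processed dependency, edges are never removed, and a vertex is never re-enqueued after processing unless a new edge targets it), then the loop terminates: either it aborts or the queue becomes empty after finitely many iterations. -/
/-- A state of the loop: a queue of vertices still to process and the set of
dependency edges recorded so far. -/
structure PState (V : Type*) where
  queue : List V
  edges : Finset (V × V)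

/-- A finite edge set contains a directed cycle. -/
def HasCycle {V : Type*} (E : Finset (V × V)) : Prop :=
  ∃ v, Relation.TransGen (fun a b => (a, b) ∈ E) v v

/-- One iteration of the loop: a vertex `v` is dequeued, edges are only added
(never removed), and every vertex of the new queue is either a leftover of the
old queue or was (re-)enqueued because a new edge from `v` to it was recorded. -/
def Step {V : Type*} (s s' : PState V) : Prop :=
  ∃ v q, s.queue = v :: q ∧
    s.edges ⊆ s'.edges ∧
    s'.queue.Nodup ∧
    (∀ w ∈ s'.queue, w ∈ q ∨ ((v, w) ∈ s'.edges ∧ (v, w) ∉ s.edges))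

/-- On a finite vertex set, the loop terminates: there is no infinite run in which
every state has a nonempty queue (a step is possible) and no cycle has been formed
(the loop has not aborted).  Hence the loop either aborts or empties its queue
after finitely many iterations. -/
theorem stmt0 {V : Type*} [Fintype V] [DecidableEq V]
    (f : ℕ → PState V)
    (hnodup : ∀ n, (f n).queue.Nodup)
    (hstep : ∀ n, Step (f n) (f (n + 1)))
    (hnoabort : ∀ n, ¬ HasCycle (f n).edges) :
    False := by
  set K := Fintype.card (V × V) with hK
  set B := Fintype.card V with hB
  set m : ℕ → ℕ := fun n => (K - (f n).edges.card) * (B + 1) + (f n).queue.length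
    with hm
  have hdec : ∀ n, m (n + 1) < m n := by
    intro n
    obtain ⟨v, q, hq, hsub, hnd, hmem⟩ := hstep n
    have hcK : (f n).edges.card ≤ K := Finset.card_le_univ _
    have hcK' : (f (n + 1)).edges.card ≤ K := Finset.card_le_univ _
    have hlenB : (f (n + 1)).queue.length ≤ B :=
      (hnodup (n + 1)).length_le_card
    by_cases heq : (f n).edges = (f (n + 1)).edges
    · -- edges unchanged: queue strictly shrinks
      have hsubq : (f (n + 1)).queue ⊆ q := by
        intro w hw
        rcases hmem w hw with h | ⟨h1, h2⟩
        · exact h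
        · exact absurd (heq ▸ h1) h2
      have hlen : (f (n + 1)).queue.length ≤ q.length :=
        (List.subperm_of_subset hnd hsubq).length_le
      have : q.length < (f n).queue.length := by
        rw [hq]; simp
      simp only [hm, heq]
      omega
    · -- edges strictly grow
      have hss : (f n).edges ⊂ (f (n + 1)).edges := ⟨hsub, fun h => heq (le_antisymm hsub h)⟩
      have hc : (f n).edges.card < (f (n + 1)).edges.card := Finset.card_lt_card hss
      have hlt : K - (f (n + 1)).edges.card < K - (f n).edges.card := by omega
      have hmul : (K - (f (n + 1)).edges.card) * (B + 1) ≤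
          (K - (f n).edges.card - 1) * (B + 1) :=
        Nat.mul_le_mul_right _ (by omega)
      have hpos : 1 ≤ K - (f n).edges.card := by omega
      have hexp : (K - (f n).edges.card) * (B + 1) =
          (K - (f n).edges.card - 1) * (B + 1) + (B + 1) := by
        have h1 : K - (f n).edges.card - 1 + 1 = K - (f n).edges.card := by omega
        conv_lhs => rw [← h1]
        ring
      have hqlen : 1 ≤ (f n).queue.length := by rw [hq]; simp
      simp only [hm]
      omega
  have hgen : ∀ n, m n + n ≤ m 0 := by
    intro n
    induction n with
    | zero => simp
    | succ k ih => have := hdec k; omega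
  have := hgen (m 0 + 1)
  omega
end

section
/- If an eGDN G is a finite directed acyclic bipartite graph of operation and slot nodes where no two distinct operation nodes share an output slot, and each operation node's populate function produces outputs consistent with its semantics function, then executing the operation nodes in any topological order of the induced dependency graph (where o₁ precedes o₂ if some output slot of o₁ is an input slot of o₂) yields a final valuation val such that every operation node o satisfies o.valid(val). -/
/-!
Write the execution order as `l₁ ++ o :: l₂`. Right after `o` executes it is valid. Every node
of `l₂` comes after `o` in the topological order, so it writes no input slot of `o`; and it is
not `o`, so it writes no output slot of `o` either. Hence the later executions leave every slot
adjacent to `o` untouched, and validity of `o` survives by locality.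
-/

theorem List.foldl_apply_eq_of_forall_mem {α S C : Type*} (f : α → (S → C) → S → C)
    (s : S) (l : List α) (hf : ∀ a ∈ l, ∀ v, f a v s = v s) (v : S → C) :
    l.foldl (fun v a => f a v) v s = v s := by
  induction l generalizing v with
  | nil => rfl
  | cons a l ih =>
    rw [List.foldl_cons, ih (fun b hb => hf b (List.mem_cons_of_mem a hb)),
      hf a List.mem_cons_self]

theorem List.idxOf_lt_idxOf_of_mem_right {α : Type*} [DecidableEq α] {l₁ l₂ : List α}
    {a b : α} (hnd : (l₁ ++ a :: l₂).Nodup) (hb : b ∈ l₂) :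
    (l₁ ++ a :: l₂).idxOf a < (l₁ ++ a :: l₂).idxOf b := by
  obtain ⟨-, hnd₂, hdisj⟩ := List.nodup_append.mp hnd
  have ha₁ : a ∉ l₁ := fun h => hdisj a h a List.mem_cons_self rfl
  have hb₁ : b ∉ l₁ := fun h => hdisj b h b (List.mem_cons_of_mem a hb) rfl
  have hab : a ≠ b := fun h => (List.nodup_cons.mp hnd₂).1 (h ▸ hb)
  rw [List.idxOf_append_of_notMem ha₁, List.idxOf_append_of_notMem hb₁, List.idxOf_cons_self,
    List.idxOf_cons_ne _ hab]
  omega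

/-- An eGDN whose operation nodes `O` have input slots `inS o` and output slots
`outS o` among the slots `S`, a validity predicate `valid o` on valuations
(depending only on the slots adjacent to `o`), and an execution function `exec`
(the populate function) modifying only the output slots and establishing
validity.  If the induced dependency relation (`o₁` precedes `o₂` if some
output slot of `o₁` is an input slot of `o₂`) is respected by the execution
order `R` (a topological order) and distinct operation nodes do not share
output slots, then after executing all operation nodes in the order `R` every
operation node is valid. -/
theorem stmt7 {O S C : Type*} [DecidableEq O]
    (inS outS : O → Set S)
    (valid : O → (S → C) → Prop)
    (exec : O → (S → C) → (S → C))
    (R : List O) (hnd : R.Nodup) (hall : ∀ o, o ∈ R)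
    -- `R` is a topological order of the induced dependency graph:
    (htopo : ∀ o₁ o₂, (outS o₁ ∩ inS o₂).Nonempty → R.idxOf o₁ < R.idxOf o₂)
    -- distinct operation nodes have disjoint output slot sets:
    (hdisj : ∀ o₁ o₂, o₁ ≠ o₂ → outS o₁ ∩ outS o₂ = ∅)
    -- executing `o` modifies only the contents of `o`'s output slots:
    (hframe : ∀ o v s, s ∉ outS o → exec o v s = v s)
    -- executing `o` establishes `o.valid` (the populate function produces
    -- outputs consistent with the semantics function):
    (hvalid : ∀ o v, valid o (exec o v))
    -- `o.valid` depends only on the contents of the slots adjacent to `o`: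
    (hlocal : ∀ o v v', (∀ s ∈ inS o ∪ outS o, v s = v' s) →
      valid o v → valid o v')
    (val : S → C) :
    ∀ o, valid o (R.foldl (fun v o' => exec o' v) val) := by
  intro o
  obtain ⟨l₁, l₂, rfl⟩ := List.append_of_mem (hall o)
  rw [List.foldl_append, List.foldl_cons]
  refine hlocal o _ _ (fun s hs => ?_) (hvalid o (l₁.foldl (fun v o' => exec o' v) val))
  refine (List.foldl_apply_eq_of_forall_mem exec s l₂
    (fun o' ho' v => hframe o' v s fun hwrite => ?_) _).symm
  have hlt := List.idxOf_lt_idxOf_of_mem_right hnd ho'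
  rcases hs with hin | hout
  · exact (htopo o' o ⟨s, hwrite, hin⟩).not_gt hlt
  · have hne : o' ≠ o := fun h => hlt.ne (h ▸ rfl)
    exact Set.eq_empty_iff_forall_notMem.mp (hdisj o' o hne) s ⟨hwrite, hout⟩
end

section
/- In the fixpoint iteration algorithm for eGDN execution, the invariant 'every operation node o with ¬o.valid(val) is contained in the current worklist D' is preserved by each iteration, assuming each executed node becomes valid after its update (unless its own input slots change, in which case it is re-added) and all nodes whose adjacent slots are modified are added to the next worklist; consequently, if the algorithm terminates (D = ∅), then o.valid(val) holds for all operation nodes o. -/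
/-- Key lemma: folding the processing step over a list preserves the
worklist invariant.  If every node invalid for the starting valuation is
either in the list still to be processed or already in the accumulated
worklist, then every node invalid for the final valuation is in the final
worklist. -/
theorem fold_inv {O Slot C : Type*}
    (inS outS : O → Set Slot)
    (valid : O → (Slot → C) → Prop)
    (exec : O → (Slot → C) → (Slot → C))
    (hlocal : ∀ o v v', (∀ s ∈ inS o ∪ outS o, v s = v' s) →
      valid o v → valid o v')
    (hvalid : ∀ o v, valid o (exec o v)) :
    ∀ (l : List O) (v : Slot → C) (D : Set O),
      (∀ o, ¬ valid o v → o ∈ l ∨ o ∈ D) →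
      ∀ o, ¬ valid o
          ((l.foldl
            (fun p o =>
              (exec o p.1,
                p.2 ∪ {o' | ∃ s ∈ inS o' ∪ outS o',
                  exec o p.1 s ≠ p.1 s ∧ (o' ≠ o ∨ s ∈ inS o)}))
            (v, D)).1) →
        o ∈ (l.foldl
            (fun p o =>
              (exec o p.1,
                p.2 ∪ {o' | ∃ s ∈ inS o' ∪ outS o',
                  exec o p.1 s ≠ p.1 s ∧ (o' ≠ o ∨ s ∈ inS o)}))
            (v, D)).2 := by
  intro l
  induction l with
  | nil =>
      intro v D h o ho
      simpa using (h o (by simpa using ho)).resolve_left (by simp)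
  | cons a t ih =>
      intro v D h o ho
      simp only [List.foldl_cons] at ho ⊢
      refine ih (exec a v) _ ?_ o ho
      intro o' ho'
      by_cases hv : valid o' v
      · -- `o'` was valid before executing `a`, so some adjacent slot changed
        have hne : o' ≠ a := by
          rintro rfl; exact ho' (hvalid o' v)
        have : ¬ ∀ s ∈ inS o' ∪ outS o', v s = exec a v s := fun hall =>
          ho' (hlocal o' v (exec a v) hall hv)
        push_neg at this
        obtain ⟨s, hs, hsne⟩ := this
        exact Or.inr (Or.inr ⟨s, hs, Ne.symm hsne, Or.inl hne⟩)
      · rcases h o' hv with hmem | hmem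
        · rcases List.mem_cons.mp hmem with rfl | hmem
          · exact absurd (hvalid o' v) ho'
          · exact Or.inl hmem
        · exact Or.inr (Or.inl hmem)

/-- Fixpoint iteration for eGDN execution.  `valseq n` and `Dseq n` are the
valuation and the worklist at the start of round `n`; round `n` processes the
nodes of the worklist (enumerated without repetition by the list `L n`) one by
one: each processed node `o` is executed (modifying only its output slots and
establishing `o.valid`), and whenever a slot `s` is thereby modified, all nodes
adjacent to `s` — other than `o` itself, unless `s` is among `o`'s input
slots — are added to the next worklist.  If initially every invalid node is in
the worklist, then this invariant is preserved by every round, and consequently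
if the algorithm terminates (`Dseq n = ∅`) then every operation node is valid. -/
theorem stmt13 {O Slot C : Type*}
    (inS outS : O → Set Slot)
    (valid : O → (Slot → C) → Prop)
    (exec : O → (Slot → C) → (Slot → C))
    -- validity depends only on the slots adjacent to a node:
    (hlocal : ∀ o v v', (∀ s ∈ inS o ∪ outS o, v s = v' s) →
      valid o v → valid o v')
    -- executing a node modifies only its output slots:
    (hframe : ∀ o v s, s ∉ outS o → exec o v s = v s)
    -- executing a node establishes its validity:
    (hvalid : ∀ o v, valid o (exec o v))
    (valseq : ℕ → Slot → C) (Dseq : ℕ → Set O)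
    (L : ℕ → List O)
    (hLnd : ∀ n, (L n).Nodup)
    (hLmem : ∀ n o, o ∈ L n ↔ o ∈ Dseq n)
    -- one round: fold the processing step over the current worklist:
    (hround : ∀ n,
      (L n).foldl
        (fun p o =>
          (exec o p.1,
            p.2 ∪ {o' | ∃ s ∈ inS o' ∪ outS o',
              exec o p.1 s ≠ p.1 s ∧ (o' ≠ o ∨ s ∈ inS o)}))
        (valseq n, (∅ : Set O))
      = (valseq (n + 1), Dseq (n + 1)))
    -- initially, every invalid node is in the worklist:
    (hinit : ∀ o, ¬ valid o (valseq 0) → o ∈ Dseq 0) :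
    (∀ n o, ¬ valid o (valseq n) → o ∈ Dseq n) ∧
    (∀ n, Dseq n = ∅ → ∀ o, valid o (valseq n)) := by
  have inv : ∀ n o, ¬ valid o (valseq n) → o ∈ Dseq n := by
    intro n
    induction n with
    | zero => exact hinit
    | succ n ih =>
        intro o ho
        have key := fold_inv inS outS valid exec hlocal hvalid (L n) (valseq n) ∅
          (fun o' ho' => Or.inl ((hLmem n o').mpr (ih o' ho'))) o
        rw [hround n] at key
        exact key ho
  refine ⟨inv, fun n hD o => ?_⟩
  by_contra h
  have := inv n o h
  simp [hD] at this
end
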